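/- arXiv:2202.03706 — 2 statements merged into one kernel-verified Lean document; each statement's English description precedes it below -/
import Mathlib

section
/- Let G = (V, E, δ) be a temporal graph with δ > 0, let Φ_in : ℕ × ℕ → ℝ, and define for a node v and time t the quantity W_in(v, t) = Σ_{ω} τ_{Φ_in}(ω), the sum over all temporal walks ω of length ≥ 1 ending at v at arrival time t of their weights. Then W_in satisfies the recurrence W_in(v, t) = Σ_{(u,v,s) ∈ E, s + δ = t} (1 + Σ_{t' : t' ≤ s} W_in(u, t') · Φ_in(t', s)), where t' ranges over arrival times of walks at u. -/
/-!
Split a walk at its last edge `(u, v, s)`. A one-edge walk contributes `1`; a longer one is a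
walk arriving at `u` at some time `t' ≤ s` followed by that edge, and its weight is the weight
of the prefix times `Φ(t', s)`. Since `δ > 0`, arrival times strictly increase along a walk, so
no walk repeats an edge: the truncation of `W_in` at `|E|` edges loses nothing, in particular
not when a walk is extended by one edge.
-/

open Finset

abbrev TEdge (V : Type) := V × V × ℕ

/-- Total weight `W_in(v,t)` of all temporal walks of length ≥ 1 ending at node `v`
with arrival time `t`. A walk with `m + 1` edges is encoded as `f : Fin (m+1) → ↥E`
satisfying the temporal walk conditions; since `δ > 0` every temporal walk has at most
`|E|` edges, so summing `m ∈ {0, …, |E| - 1}` captures all walks. The weight of a walk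
is `∏_{i=1}^{ℓ-1} Φ(t_i + δ, t_{i+1})` (equal to 1 for walks of length 1). -/
noncomputable def WIn {V : Type} [DecidableEq V] (E : Finset (TEdge V)) (δ : ℕ)
    (Φ : ℕ → ℕ → ℝ) (v : V) (t : ℕ) : ℝ :=
  ∑ m ∈ Finset.range E.card,
    ∑ f ∈ Finset.univ.filter (fun f : Fin (m + 1) → {e : TEdge V // e ∈ E} =>
        (∀ i : Fin m, (f i.castSucc).1.2.1 = (f i.succ).1.1 ∧
          (f i.castSucc).1.2.2 + δ ≤ (f i.succ).1.2.2) ∧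
        (f (Fin.last m)).1.2.1 = v ∧ (f (Fin.last m)).1.2.2 + δ = t),
      ∏ i : Fin m, Φ ((f i.castSucc).1.2.2 + δ) ((f i.succ).1.2.2)

section TemporalWalk

variable {V : Type} {E : Finset (TEdge V)} {δ : ℕ}

abbrev IsTemporalWalk (δ : ℕ) {m : ℕ} (f : Fin (m + 1) → E) : Prop :=
  ∀ i : Fin m, (f i.castSucc).1.2.1 = (f i.succ).1.1 ∧
    (f i.castSucc).1.2.2 + δ ≤ (f i.succ).1.2.2

def walkWeight (δ : ℕ) (Φ : ℕ → ℕ → ℝ) {m : ℕ} (f : Fin (m + 1) → E) : ℝ :=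
  ∏ i : Fin m, Φ ((f i.castSucc).1.2.2 + δ) (f i.succ).1.2.2

theorem IsTemporalWalk.strictMono (hδ : 0 < δ) {m : ℕ} {f : Fin (m + 1) → E}
    (hf : IsTemporalWalk δ f) : StrictMono fun i => (f i).1.2.2 :=
  Fin.strictMono_iff_lt_succ.2 fun i => (Nat.lt_add_of_pos_right hδ).trans_le (hf i).2

theorem IsTemporalWalk.length_le_card (hδ : 0 < δ) {m : ℕ} {f : Fin (m + 1) → E}
    (hf : IsTemporalWalk δ f) : m + 1 ≤ E.card := by
  simpa using Fintype.card_le_of_injective f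
    (Function.Injective.of_comp (f := fun e : E => e.1.2.2) (hf.strictMono hδ).injective)

theorem isTemporalWalk_snoc {m : ℕ} (g : Fin (m + 1) → E) (e : E) :
    IsTemporalWalk δ (Fin.snoc g e : Fin (m + 2) → E) ↔
      IsTemporalWalk δ g ∧ (g (Fin.last m)).1.2.1 = e.1.1 ∧
        (g (Fin.last m)).1.2.2 + δ ≤ e.1.2.2 := by
  rw [IsTemporalWalk, Fin.forall_fin_succ']
  simp only [← Fin.castSucc_succ, Fin.snoc_castSucc, Fin.succ_last, Fin.snoc_last]

theorem walkWeight_snoc (Φ : ℕ → ℕ → ℝ) {m : ℕ} (g : Fin (m + 1) → E) (e : E) :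
    walkWeight δ Φ (Fin.snoc g e : Fin (m + 2) → E) =
      walkWeight δ Φ g * Φ ((g (Fin.last m)).1.2.2 + δ) e.1.2.2 := by
  simp only [walkWeight, Fin.prod_univ_castSucc, ← Fin.castSucc_succ, Fin.snoc_castSucc,
    Fin.succ_last, Fin.snoc_last]

variable [DecidableEq V]

noncomputable def walksTo (E : Finset (TEdge V)) (δ m : ℕ) (v : V) (t : ℕ) :
    Finset (Fin (m + 1) → E) :=
  univ.filter fun f => IsTemporalWalk δ f ∧
    (f (Fin.last m)).1.2.1 = v ∧ (f (Fin.last m)).1.2.2 + δ = t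

noncomputable def walksToBy (E : Finset (TEdge V)) (δ m : ℕ) (v : V) (s : ℕ) :
    Finset (Fin (m + 1) → E) :=
  univ.filter fun f => IsTemporalWalk δ f ∧
    (f (Fin.last m)).1.2.1 = v ∧ (f (Fin.last m)).1.2.2 + δ ≤ s

theorem WIn_eq_sum_walksTo (Φ : ℕ → ℕ → ℝ) (v : V) (t : ℕ) :
    WIn E δ Φ v t =
      ∑ m ∈ range E.card, ∑ f ∈ walksTo E δ m v t, walkWeight δ Φ f :=
  rfl

theorem walksTo_eq_empty (hδ : 0 < δ) {m : ℕ} (hm : E.card ≤ m) (v : V) (t : ℕ) :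
    walksTo E δ m v t = ∅ :=
  filter_eq_empty_iff.2 fun _ _ hf => absurd (hf.1.length_le_card hδ) (by omega)

theorem WIn_eq_sum_range (hδ : 0 < δ) {N : ℕ} (hN : E.card ≤ N) (Φ : ℕ → ℕ → ℝ)
    (v : V) (t : ℕ) :
    WIn E δ Φ v t = ∑ m ∈ range N, ∑ f ∈ walksTo E δ m v t, walkWeight δ Φ f := by
  rw [WIn_eq_sum_walksTo]
  refine sum_subset (range_subset_range.2 hN) fun m _ hm => ?_
  rw [walksTo_eq_empty hδ (by simpa using hm), sum_empty]

theorem snoc_mem_walksTo {m : ℕ} {g : Fin (m + 1) → E} {e : E} {v : V} {t : ℕ} :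
    (Fin.snoc g e : Fin (m + 2) → E) ∈ walksTo E δ (m + 1) v t ↔
      g ∈ walksToBy E δ m e.1.1 e.1.2.2 ∧ e.1.2.1 = v ∧ e.1.2.2 + δ = t := by
  simp only [walksTo, walksToBy, mem_filter, mem_univ, true_and, isTemporalWalk_snoc,
    Fin.snoc_last]

theorem sum_walksTo_zero (Φ : ℕ → ℕ → ℝ) (v : V) (t : ℕ) :
    ∑ f ∈ walksTo E δ 0 v t, walkWeight δ Φ f =
      ∑ _ ∈ E.filter (fun e => e.2.1 = v ∧ e.2.2 + δ = t), 1 := by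
  refine sum_bij' (fun f _ => (f (Fin.last 0)).1) (fun e he _ => ⟨e, (mem_filter.1 he).1⟩)
    ?_ ?_ ?_ ?_ ?_
  · intro f hf
    exact mem_filter.2 ⟨(f _).2, (mem_filter.1 hf).2.2⟩
  · intro _ he
    exact mem_filter.2 ⟨mem_univ _, finZeroElim, (mem_filter.1 he).2⟩
  · intro f _
    funext i
    rw [Fin.fin_one_eq_zero i]
    rfl
  · intro e _
    rfl
  · intro f _
    simp [walkWeight]

theorem sum_walksTo_succ_filter_last (Φ : ℕ → ℕ → ℝ) {m : ℕ} {v : V} {t : ℕ} {e : TEdge V}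
    (he : e ∈ E) (hev : e.2.1 = v) (het : e.2.2 + δ = t) :
    ∑ f ∈ (walksTo E δ (m + 1) v t).filter (fun f => (f (Fin.last (m + 1))).1 = e),
        walkWeight δ Φ f =
      ∑ g ∈ walksToBy E δ m e.1 e.2.2,
        walkWeight δ Φ g * Φ ((g (Fin.last m)).1.2.2 + δ) e.2.2 := by
  have snoc_init : ∀ f ∈ (walksTo E δ (m + 1) v t).filter
      (fun f => (f (Fin.last (m + 1))).1 = e), Fin.snoc (Fin.init f) ⟨e, he⟩ = f := by
    intro f hf
    have hlast : f (Fin.last (m + 1)) = ⟨e, he⟩ := Subtype.ext (mem_filter.1 hf).2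
    rw [← hlast]
    exact Fin.snoc_init_self f
  refine sum_nbij' Fin.init (fun g => Fin.snoc g ⟨e, he⟩) ?_ ?_ ?_ ?_ ?_
  · intro f hf
    have hmem := (mem_filter.1 hf).1
    rw [← snoc_init f hf] at hmem
    exact (snoc_mem_walksTo.1 hmem).1
  · intro g hg
    exact mem_filter.2 ⟨snoc_mem_walksTo.2 ⟨hg, hev, het⟩, by simp⟩
  · exact snoc_init
  · intro g _
    exact Fin.init_snoc _ _
  · intro f hf
    conv_lhs => rw [← snoc_init f hf]
    exact walkWeight_snoc Φ _ _

theorem sum_walksToBy_eq_sum_walksTo {M : Type*} [AddCommMonoid M] {m : ℕ} (u : V) (s : ℕ)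
    (F : (Fin (m + 1) → E) → ℕ → M) :
    ∑ g ∈ walksToBy E δ m u s, F g ((g (Fin.last m)).1.2.2 + δ) =
      ∑ t' ∈ ((E.filter fun e => e.2.1 = u).image fun e => e.2.2 + δ).filter (· ≤ s),
        ∑ g ∈ walksTo E δ m u t', F g t' := by
  rw [← sum_fiberwise_of_maps_to (g := fun g => (g (Fin.last m)).1.2.2 + δ)]
  · refine sum_congr rfl fun t' ht' => ?_
    rw [walksToBy, filter_filter]
    refine sum_congr (filter_congr fun g _ => ?_) fun g hg => ?_
    · refine ⟨fun ⟨⟨hw, hu, _⟩, ht⟩ => ⟨hw, hu, ht⟩, fun ⟨hw, hu, ht⟩ => ⟨⟨hw, hu, ?_⟩, ht⟩⟩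
      exact ht ▸ (mem_filter.1 ht').2
    · rw [(mem_filter.1 hg).2.2.2]
  · intro g hg
    obtain ⟨-, -, hu, hs⟩ := mem_filter.1 hg
    exact mem_filter.2 ⟨mem_image.2 ⟨_, mem_filter.2 ⟨(g _).2, hu⟩, rfl⟩, hs⟩

theorem sum_walksTo_succ (Φ : ℕ → ℕ → ℝ) (m : ℕ) (v : V) (t : ℕ) :
    ∑ f ∈ walksTo E δ (m + 1) v t, walkWeight δ Φ f =
      ∑ e ∈ E.filter (fun e => e.2.1 = v ∧ e.2.2 + δ = t),
        ∑ t' ∈ ((E.filter fun e' => e'.2.1 = e.1).image fun e' => e'.2.2 + δ).filter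
            (· ≤ e.2.2),
          (∑ g ∈ walksTo E δ m e.1 t', walkWeight δ Φ g) * Φ t' e.2.2 := by
  rw [← sum_fiberwise_of_maps_to (g := fun f => (f (Fin.last (m + 1))).1)]
  · refine sum_congr rfl fun e he => ?_
    obtain ⟨heE, hev, het⟩ := mem_filter.1 he
    rw [sum_walksTo_succ_filter_last Φ heE hev het,
      sum_walksToBy_eq_sum_walksTo e.1 e.2.2 fun g t' => walkWeight δ Φ g * Φ t' e.2.2]
    simp only [sum_mul]
  · intro f hf
    exact mem_filter.2 ⟨(f _).2, (mem_filter.1 hf).2.2⟩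

end TemporalWalk

/-- `W_in` satisfies the recurrence
`W_in(v,t) = Σ_{(u,v,s) ∈ E, s + δ = t} (1 + Σ_{t' ≤ s} W_in(u,t')·Φ_in(t',s))`,
where `t'` ranges over the arrival times of walks at `u` (i.e. times `t'' + δ` for
edges `(·,u,t'') ∈ E`) that are at most `s`. -/
theorem stmt10 {V : Type} [DecidableEq V] (E : Finset (TEdge V)) (δ : ℕ) (hδ : 0 < δ)
    (Φin : ℕ → ℕ → ℝ) (v : V) (t : ℕ) :
    WIn E δ Φin v t =
      ∑ e ∈ E.filter (fun e => e.2.1 = v ∧ e.2.2 + δ = t),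
        (1 + ∑ t' ∈ ((E.filter (fun e' => e'.2.1 = e.1)).image
              (fun e' => e'.2.2 + δ)).filter (fun t' => t' ≤ e.2.2),
            WIn E δ Φin e.1 t' * Φin t' e.2.2) := by
  rw [WIn_eq_sum_range hδ E.card.le_succ, sum_range_succ', sum_walksTo_zero]
  simp only [sum_walksTo_succ]
  rw [sum_comm, ← sum_add_distrib]
  refine sum_congr rfl fun e _ => ?_
  rw [add_comm, sum_comm]
  refine congrArg _ (sum_congr rfl fun t' _ => ?_)
  rw [WIn_eq_sum_walksTo, sum_mul]
end

section
/- Let G = (V, E, δ) be a temporal graph with δ > 0, and let N(v) denote the total number of temporal walks (of any length ≥ 2) in G in which v occurs as an internal node. Then N(v) = Σ_{t1 ≤ t2} W_in(v, t1) · W_out(v, t2), where W_in(v, t) and W_out(v, t) count temporal walks of length ≥ 1 ending at v at time t and starting at v at time t respectively; i.e., concatenation at v gives a bijection between pairs (incoming walk arriving at time t1, outgoing walk starting at time t2 ≥ t1) and temporal walks through v marked at an internal occurrence of v. -/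
open Finset

/-- Total weight of temporal walks of length ≥ 1 starting at `v` at time `t`. -/
noncomputable def WOut {V : Type} [DecidableEq V] (E : Finset (TEdge V)) (δ : ℕ)
    (Φ : ℕ → ℕ → ℝ) (v : V) (t : ℕ) : ℝ :=
  ∑ m ∈ Finset.range E.card,
    ∑ f ∈ Finset.univ.filter (fun f : Fin (m + 1) → {e : TEdge V // e ∈ E} =>
        (∀ i : Fin m, (f i.castSucc).1.2.1 = (f i.succ).1.1 ∧
          (f i.castSucc).1.2.2 + δ ≤ (f i.succ).1.2.2) ∧
        (f 0).1.1 = v ∧ (f 0).1.2.2 = t),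
      ∏ i : Fin m, Φ ((f i.castSucc).1.2.2 + δ) ((f i.succ).1.2.2)

/-- `N(v)`: the number of pairs (temporal walk, internal occurrence of `v`), i.e. the
number of temporal walks counted with multiplicity of internal occurrences of `v`.
A walk with `m + 1` edges has internal positions `i : Fin m`, where the internal node
between edges `i` and `i + 1` is the target of edge `i`. -/
noncomputable def NThrough {V : Type} [DecidableEq V] (E : Finset (TEdge V)) (δ : ℕ)
    (v : V) : ℝ :=
  ∑ m ∈ Finset.range E.card,
    ∑ f ∈ Finset.univ.filter (fun f : Fin (m + 1) → {e : TEdge V // e ∈ E} =>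
        ∀ i : Fin m, (f i.castSucc).1.2.1 = (f i.succ).1.1 ∧
          (f i.castSucc).1.2.2 + δ ≤ (f i.succ).1.2.2),
      ((Finset.univ.filter (fun i : Fin m => (f i.castSucc).1.2.1 = v)).card : ℝ)

/-- The set `T(G)` of starting and arrival times of a temporal graph. -/
def timeSet {V : Type} (E : Finset (TEdge V)) (δ : ℕ) : Finset ℕ :=
  E.image (fun e => e.2.2) ∪ E.image (fun e => e.2.2 + δ)

section Aux19

variable {V : Type} [DecidableEq V] (E : Finset (TEdge V)) (δ : ℕ) (v : V)

/-- Validity of a temporal walk given by its sequence of edges. -/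
abbrev valid19 {m : ℕ} (f : Fin (m + 1) → {e : TEdge V // e ∈ E}) : Prop :=
  ∀ i : Fin m, (f i.castSucc).1.2.1 = (f i.succ).1.1 ∧
    (f i.castSucc).1.2.2 + δ ≤ (f i.succ).1.2.2

lemma valid19_iff {m : ℕ} (f : Fin (m + 1) → {e : TEdge V // e ∈ E}) :
    valid19 E δ f ↔ ∀ k, ∀ hk : k < m,
      (f ⟨k, by omega⟩).1.2.1 = (f ⟨k + 1, by omega⟩).1.1 ∧
      (f ⟨k, by omega⟩).1.2.2 + δ ≤ (f ⟨k + 1, by omega⟩).1.2.2 := by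
  constructor
  · intro h k hk
    exact h ⟨k, hk⟩
  · intro h i
    obtain ⟨k, hk⟩ := i
    exact h k hk

lemma valid19_strictMono (hδ : 0 < δ) {m : ℕ} {f : Fin (m + 1) → {e : TEdge V // e ∈ E}}
    (hf : valid19 E δ f) : StrictMono fun i => (f i).1.2.2 := by
  refine Fin.strictMono_iff_lt_succ.mpr fun i => ?_
  have h := (hf i).2
  show (f i.castSucc).1.2.2 < (f i.succ).1.2.2
  omega

lemma valid19_card (hδ : 0 < δ) {m : ℕ} {f : Fin (m + 1) → {e : TEdge V // e ∈ E}}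
    (hf : valid19 E δ f) : m + 1 ≤ E.card := by
  have hinj : Function.Injective f := fun i j hij =>
    (valid19_strictMono E δ hδ hf).injective (by rw [hij])
  calc m + 1 = Fintype.card (Fin (m + 1)) := (Fintype.card_fin _).symm
    _ ≤ Fintype.card {e : TEdge V // e ∈ E} := Fintype.card_le_of_injective f hinj
    _ = E.card := Fintype.card_coe E

/-- Concatenation of two walks. -/
def cat19 {m1 m2 : ℕ} (g : Fin (m1 + 1) → {e : TEdge V // e ∈ E})
    (h : Fin (m2 + 1) → {e : TEdge V // e ∈ E}) :
    Fin (m1 + 1 + m2 + 1) → {e : TEdge V // e ∈ E} := fun i =>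
  if hi : (i : ℕ) < m1 + 1 then g ⟨i, hi⟩
  else h ⟨(i : ℕ) - (m1 + 1), by have := i.isLt; omega⟩

lemma cat19_lt {m1 m2 : ℕ} (g : Fin (m1 + 1) → {e : TEdge V // e ∈ E})
    (h : Fin (m2 + 1) → {e : TEdge V // e ∈ E}) (i : Fin (m1 + 1 + m2 + 1))
    (hi : (i : ℕ) < m1 + 1) : cat19 E g h i = g ⟨i, hi⟩ := dif_pos hi

lemma cat19_ge {m1 m2 : ℕ} (g : Fin (m1 + 1) → {e : TEdge V // e ∈ E})
    (h : Fin (m2 + 1) → {e : TEdge V // e ∈ E}) (i : Fin (m1 + 1 + m2 + 1))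
    (hi : ¬ (i : ℕ) < m1 + 1) :
    cat19 E g h i = h ⟨(i : ℕ) - (m1 + 1), by have := i.isLt; omega⟩ := dif_neg hi

lemma cat19_apply_lt {m1 m2 : ℕ} (g : Fin (m1 + 1) → {e : TEdge V // e ∈ E})
    (h : Fin (m2 + 1) → {e : TEdge V // e ∈ E}) (k : ℕ) (hk : k < m1 + 1)
    (hk2 : k < m1 + 1 + m2 + 1) : cat19 E g h ⟨k, hk2⟩ = g ⟨k, hk⟩ := dif_pos hk

lemma cat19_apply_ge {m1 m2 : ℕ} (g : Fin (m1 + 1) → {e : TEdge V // e ∈ E})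
    (h : Fin (m2 + 1) → {e : TEdge V // e ∈ E}) (k : ℕ) (hk : m1 + 1 ≤ k)
    (hk2 : k < m1 + 1 + m2 + 1) :
    cat19 E g h ⟨k, hk2⟩ = h ⟨k - (m1 + 1), by omega⟩ :=
  dif_neg (show ¬ k < m1 + 1 by omega)

lemma cat19_valid {m1 m2 : ℕ} {g : Fin (m1 + 1) → {e : TEdge V // e ∈ E}}
    {h : Fin (m2 + 1) → {e : TEdge V // e ∈ E}} (hg : valid19 E δ g) (hh : valid19 E δ h)
    (hsrc : (g (Fin.last m1)).1.2.1 = (h 0).1.1)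
    (htime : (g (Fin.last m1)).1.2.2 + δ ≤ (h 0).1.2.2) :
    valid19 E δ (cat19 E g h) := by
  rw [valid19_iff]
  intro k hk
  rcases lt_trichotomy k m1 with hlt | heq | hgt
  · rw [cat19_apply_lt E g h k (by omega) (by omega),
      cat19_apply_lt E g h (k + 1) (by omega) (by omega)]
    exact (valid19_iff E δ g).mp hg k hlt
  · rw [cat19_apply_lt E g h k (by omega) (by omega),
      cat19_apply_ge E g h (k + 1) (by omega) (by omega)]
    have h1 : (⟨k, by omega⟩ : Fin (m1 + 1)) = Fin.last m1 := by
      apply Fin.ext; simp only [Fin.val_last]; omega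
    have h2 : (⟨k + 1 - (m1 + 1), by omega⟩ : Fin (m2 + 1)) = 0 := by
      apply Fin.ext; simp only [Fin.val_zero]; omega
    rw [h1, h2]
    exact ⟨hsrc, htime⟩
  · rw [cat19_apply_ge E g h k (by omega) (by omega),
      cat19_apply_ge E g h (k + 1) (by omega) (by omega)]
    have e2 : (⟨k + 1 - (m1 + 1), by omega⟩ : Fin (m2 + 1)) =
        ⟨k - (m1 + 1) + 1, by omega⟩ :=
      Fin.ext (show k + 1 - (m1 + 1) = k - (m1 + 1) + 1 by omega)
    rw [e2]
    exact (valid19_iff E δ h).mp hh (k - (m1 + 1)) (by omega)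

/-- The set of compatible pairs of an in-walk and an out-walk at `v`. -/
def Pairs19 (m1 m2 : ℕ) :
    Finset ((Fin (m1 + 1) → {e : TEdge V // e ∈ E}) × (Fin (m2 + 1) → {e : TEdge V // e ∈ E})) :=
  Finset.univ.filter fun x =>
    valid19 E δ x.1 ∧ valid19 E δ x.2 ∧ (x.1 (Fin.last m1)).1.2.1 = v ∧
      (x.2 0).1.1 = v ∧ (x.1 (Fin.last m1)).1.2.2 + δ ≤ (x.2 0).1.2.2

lemma pairs19_empty (hδ : 0 < δ) {m1 m2 : ℕ} (h : ¬ m1 + 1 + m2 < E.card) :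
    Pairs19 E δ v m1 m2 = ∅ := by
  rw [Finset.eq_empty_iff_forall_notMem]
  intro x hx
  simp only [Pairs19, Finset.mem_filter] at hx
  obtain ⟨-, h1, h2, h3, h4, h5⟩ := hx
  have hv : valid19 E δ (cat19 E x.1 x.2) :=
    cat19_valid E δ h1 h2 (by rw [h3, h4]) h5
  have := valid19_card E δ hδ hv
  omega

/-- Splitting at the marked internal occurrence: card of marked walks equals card of pairs. -/
lemma split_card (m1 m2 : ℕ) :
    (Finset.univ.filter (fun f : Fin (m1 + 1 + m2 + 1) → {e : TEdge V // e ∈ E} =>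
      valid19 E δ f ∧ (f ((⟨m1, by omega⟩ : Fin (m1 + 1 + m2)).castSucc)).1.2.1 = v)).card =
    (Pairs19 E δ v m1 m2).card := by
  refine Finset.card_bij'
    (fun f _ => ((fun j : Fin (m1 + 1) => f ⟨j, by have := j.isLt; omega⟩),
                 (fun j : Fin (m2 + 1) => f ⟨m1 + 1 + j, by have := j.isLt; omega⟩)))
    (fun x _ => cat19 E x.1 x.2) ?_ ?_ ?_ ?_
  · -- hi : image of splitting is in Pairs19
    intro f hf
    rw [Finset.mem_filter] at hf
    obtain ⟨-, hval, hmark⟩ := hf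
    rw [Fin.castSucc_mk] at hmark
    have hmid := (valid19_iff E δ f).mp hval m1 (by omega)
    simp only [Pairs19, Finset.mem_filter]
    refine ⟨Finset.mem_univ _, ?_, ?_, ?_, ?_, ?_⟩
    · rw [valid19_iff]
      intro k hk
      exact (valid19_iff E δ f).mp hval k (by omega)
    · rw [valid19_iff]
      intro k hk
      exact (valid19_iff E δ f).mp hval (m1 + 1 + k) (by omega)
    · exact hmark
    · exact hmid.1 ▸ hmark
    · exact hmid.2
  · -- hj : cat of a pair is a marked walk
    intro x hx
    simp only [Pairs19, Finset.mem_filter] at hx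
    obtain ⟨-, h1, h2, h3, h4, h5⟩ := hx
    rw [Finset.mem_filter]
    refine ⟨Finset.mem_univ _, cat19_valid E δ h1 h2 (by rw [h3, h4]) h5, ?_⟩
    beta_reduce
    rw [Fin.castSucc_mk, cat19_apply_lt E x.1 x.2 m1 (by omega) (by omega)]
    have e1 : (⟨m1, by omega⟩ : Fin (m1 + 1)) = Fin.last m1 := by
      apply Fin.ext; simp
    rw [e1]
    exact h3
  · -- left inverse : cat (split f) = f
    intro f hf
    funext i
    beta_reduce
    by_cases hi : (i : ℕ) < m1 + 1
    · rw [cat19_lt E _ _ i hi]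
    · rw [cat19_ge E _ _ i hi]
      exact congrArg f (Fin.ext (by simp only [] ; omega))
  · -- right inverse : split (cat x) = x
    intro x hx
    beta_reduce
    have hg : (fun j : Fin (m1 + 1) =>
        cat19 E x.1 x.2 ⟨(j : ℕ), by have := j.isLt; omega⟩) = x.1 := by
      funext j
      rw [cat19_apply_lt E x.1 x.2 (j : ℕ) j.isLt (by have := j.isLt; omega)]
    have hh : (fun j : Fin (m2 + 1) =>
        cat19 E x.1 x.2 ⟨m1 + 1 + (j : ℕ), by have := j.isLt; omega⟩) = x.2 := by
      funext j
      rw [cat19_apply_ge E x.1 x.2 (m1 + 1 + (j : ℕ)) (by omega)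
        (by have := j.isLt; omega)]
      exact congrArg x.2 (Fin.ext (show m1 + 1 + (j : ℕ) - (m1 + 1) = (j : ℕ) by omega))
    exact Prod.ext_iff.mpr ⟨hg, hh⟩

/-- Summing the product of in/out counts over compatible time pairs gives the pair count. -/
lemma pairs_card_eq (m1 m2 : ℕ) :
    ∑ p ∈ (timeSet E δ ×ˢ timeSet E δ).filter (fun p => p.1 ≤ p.2),
      ((Finset.univ.filter (fun f : Fin (m1 + 1) → {e : TEdge V // e ∈ E} =>
          valid19 E δ f ∧ (f (Fin.last m1)).1.2.1 = v ∧ (f (Fin.last m1)).1.2.2 + δ = p.1)).card *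
       (Finset.univ.filter (fun f : Fin (m2 + 1) → {e : TEdge V // e ∈ E} =>
          valid19 E δ f ∧ (f 0).1.1 = v ∧ (f 0).1.2.2 = p.2)).card)
    = (Pairs19 E δ v m1 m2).card := by
  have key : ∀ x ∈ Pairs19 E δ v m1 m2,
      (((x.1 (Fin.last m1)).1.2.2 + δ, (x.2 0).1.2.2) : ℕ × ℕ) ∈
        (timeSet E δ ×ˢ timeSet E δ).filter (fun p => p.1 ≤ p.2) := by
    intro x hx
    simp only [Pairs19, Finset.mem_filter] at hx
    obtain ⟨-, h1, h2, h3, h4, h5⟩ := hx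
    rw [Finset.mem_filter, Finset.mem_product]
    refine ⟨⟨?_, ?_⟩, h5⟩
    · exact Finset.mem_union_right _ (Finset.mem_image.mpr ⟨(x.1 (Fin.last m1)).1,
        (x.1 (Fin.last m1)).2, rfl⟩)
    · exact Finset.mem_union_left _ (Finset.mem_image.mpr ⟨(x.2 0).1, (x.2 0).2, rfl⟩)
  rw [Finset.card_eq_sum_card_fiberwise key]
  apply Finset.sum_congr rfl
  intro p hp
  rw [Finset.mem_filter, Finset.mem_product] at hp
  rw [← Finset.card_product]
  congr 1
  ext x
  rw [Finset.mem_product, Finset.mem_filter, Finset.mem_filter, Finset.mem_filter,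
    Pairs19, Finset.mem_filter]
  constructor
  · rintro ⟨⟨-, h1, h3, hk1⟩, ⟨-, h2, h4, hk2⟩⟩
    refine ⟨⟨Finset.mem_univ _, h1, h2, h3, h4, ?_⟩, ?_⟩
    · rw [hk1, hk2]; exact hp.2
    · rw [Prod.ext_iff]; exact ⟨hk1, hk2⟩
  · rintro ⟨⟨-, h1, h2, h3, h4, h5⟩, hkey⟩
    have hk1 : (x.1 (Fin.last m1)).1.2.2 + δ = p.1 := congrArg Prod.fst hkey
    have hk2 : (x.2 0).1.2.2 = p.2 := congrArg Prod.snd hkey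
    exact ⟨⟨Finset.mem_univ _, h1, h3, hk1⟩, ⟨Finset.mem_univ _, h2, h4, hk2⟩⟩

lemma main_nat (hδ : 0 < δ) :
    ∑ m ∈ Finset.range E.card,
      ∑ f ∈ Finset.univ.filter (fun f : Fin (m + 1) → {e : TEdge V // e ∈ E} =>
          valid19 E δ f),
        (Finset.univ.filter (fun i : Fin m => (f i.castSucc).1.2.1 = v)).card
    = ∑ p ∈ (timeSet E δ ×ˢ timeSet E δ).filter (fun p => p.1 ≤ p.2),
        (∑ m1 ∈ Finset.range E.card,
          (Finset.univ.filter (fun f : Fin (m1 + 1) → {e : TEdge V // e ∈ E} =>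
            valid19 E δ f ∧ (f (Fin.last m1)).1.2.1 = v ∧
              (f (Fin.last m1)).1.2.2 + δ = p.1)).card) *
        (∑ m2 ∈ Finset.range E.card,
          (Finset.univ.filter (fun f : Fin (m2 + 1) → {e : TEdge V // e ∈ E} =>
            valid19 E δ f ∧ (f 0).1.1 = v ∧ (f 0).1.2.2 = p.2)).card) := by
  -- RHS to double sum of Pairs19 cards
  have rhs_eq :
      ∑ p ∈ (timeSet E δ ×ˢ timeSet E δ).filter (fun p => p.1 ≤ p.2),
        (∑ m1 ∈ Finset.range E.card,
          (Finset.univ.filter (fun f : Fin (m1 + 1) → {e : TEdge V // e ∈ E} =>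
            valid19 E δ f ∧ (f (Fin.last m1)).1.2.1 = v ∧
              (f (Fin.last m1)).1.2.2 + δ = p.1)).card) *
        (∑ m2 ∈ Finset.range E.card,
          (Finset.univ.filter (fun f : Fin (m2 + 1) → {e : TEdge V // e ∈ E} =>
            valid19 E δ f ∧ (f 0).1.1 = v ∧ (f 0).1.2.2 = p.2)).card)
      = ∑ m1 ∈ Finset.range E.card, ∑ m2 ∈ Finset.range E.card,
          (Pairs19 E δ v m1 m2).card := by
    have step : ∀ p ∈ (timeSet E δ ×ˢ timeSet E δ).filter (fun p : ℕ × ℕ => p.1 ≤ p.2),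
        (∑ m1 ∈ Finset.range E.card,
          (Finset.univ.filter (fun f : Fin (m1 + 1) → {e : TEdge V // e ∈ E} =>
            valid19 E δ f ∧ (f (Fin.last m1)).1.2.1 = v ∧
              (f (Fin.last m1)).1.2.2 + δ = p.1)).card) *
        (∑ m2 ∈ Finset.range E.card,
          (Finset.univ.filter (fun f : Fin (m2 + 1) → {e : TEdge V // e ∈ E} =>
            valid19 E δ f ∧ (f 0).1.1 = v ∧ (f 0).1.2.2 = p.2)).card)
        = ∑ m1 ∈ Finset.range E.card, ∑ m2 ∈ Finset.range E.card,
            ((Finset.univ.filter (fun f : Fin (m1 + 1) → {e : TEdge V // e ∈ E} =>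
              valid19 E δ f ∧ (f (Fin.last m1)).1.2.1 = v ∧
                (f (Fin.last m1)).1.2.2 + δ = p.1)).card *
             (Finset.univ.filter (fun f : Fin (m2 + 1) → {e : TEdge V // e ∈ E} =>
              valid19 E δ f ∧ (f 0).1.1 = v ∧ (f 0).1.2.2 = p.2)).card) :=
      fun p _ => Finset.sum_mul_sum _ _ _ _
    rw [Finset.sum_congr rfl step, Finset.sum_comm]
    apply Finset.sum_congr rfl
    intro m1 _
    rw [Finset.sum_comm]
    apply Finset.sum_congr rfl
    intro m2 _
    exact pairs_card_eq E δ v m1 m2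
  rw [rhs_eq]
  clear rhs_eq
  -- LHS : swap the count of marks inside
  have lhs_eq :
      ∑ m ∈ Finset.range E.card,
        ∑ f ∈ Finset.univ.filter (fun f : Fin (m + 1) → {e : TEdge V // e ∈ E} =>
            valid19 E δ f),
          (Finset.univ.filter (fun i : Fin m => (f i.castSucc).1.2.1 = v)).card
      = ∑ m ∈ Finset.range E.card, ∑ i ∈ (Finset.univ : Finset (Fin m)),
          (Finset.univ.filter (fun f : Fin (m + 1) → {e : TEdge V // e ∈ E} =>
            valid19 E δ f ∧ (f i.castSucc).1.2.1 = v)).card := by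
    apply Finset.sum_congr rfl
    intro m _
    simp only [Finset.card_filter]
    rw [Finset.sum_comm]
    apply Finset.sum_congr rfl
    intro i _
    rw [Finset.sum_filter]
    apply Finset.sum_congr rfl
    intro f _
    split_ifs <;> first | rfl | tauto
  rw [lhs_eq]
  clear lhs_eq
  -- reindex (m, i) ↦ (i, m - 1 - i)
  rw [Finset.sum_sigma']
  rw [show (∑ m1 ∈ Finset.range E.card, ∑ m2 ∈ Finset.range E.card,
        (Pairs19 E δ v m1 m2).card)
      = ∑ y ∈ (Finset.range E.card ×ˢ Finset.range E.card),
          (Pairs19 E δ v y.1 y.2).card by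
    rw [Finset.sum_product]]
  rw [show (∑ y ∈ (Finset.range E.card ×ˢ Finset.range E.card),
        (Pairs19 E δ v y.1 y.2).card)
      = ∑ y ∈ (Finset.range E.card ×ˢ Finset.range E.card).filter
          (fun y => y.1 + 1 + y.2 < E.card), (Pairs19 E δ v y.1 y.2).card by
    symm
    apply Finset.sum_subset (Finset.filter_subset _ _)
    intro y hy1 hy
    rw [Finset.mem_filter] at hy
    have hne : ¬ (y.1 + 1 + y.2 < E.card) := by tauto
    rw [pairs19_empty E δ v hδ hne, Finset.card_empty]]
  have hmem1 : ∀ x : Σ n : ℕ, Fin n,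
      x ∈ (Finset.range E.card).sigma (fun m => (Finset.univ : Finset (Fin m))) →
      ((((x.2 : ℕ), x.1 - 1 - (x.2 : ℕ)) : ℕ × ℕ) ∈
        (Finset.range E.card ×ˢ Finset.range E.card).filter
          (fun y => y.1 + 1 + y.2 < E.card)) := by
    intro x hx
    rw [Finset.mem_sigma] at hx
    have h1 := Finset.mem_range.mp hx.1
    have h2 := x.2.isLt
    rw [Finset.mem_filter, Finset.mem_product, Finset.mem_range, Finset.mem_range]
    exact ⟨⟨by omega, by omega⟩, by omega⟩
  have hmem2 : ∀ y : ℕ × ℕ,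
      y ∈ (Finset.range E.card ×ˢ Finset.range E.card).filter
        (fun y => y.1 + 1 + y.2 < E.card) →
      ((⟨y.1 + 1 + y.2, (⟨y.1, Nat.lt_of_lt_of_le (Nat.lt_succ_self y.1)
          (Nat.le_add_right _ _)⟩ : Fin (y.1 + 1 + y.2))⟩ : Σ n : ℕ, Fin n) ∈
        (Finset.range E.card).sigma (fun m => (Finset.univ : Finset (Fin m)))) := by
    intro y hy
    rw [Finset.mem_filter, Finset.mem_product] at hy
    rw [Finset.mem_sigma]
    exact ⟨Finset.mem_range.mpr hy.2, Finset.mem_univ _⟩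
  have hleft : ∀ x : Σ n : ℕ, Fin n,
      x ∈ (Finset.range E.card).sigma (fun m => (Finset.univ : Finset (Fin m))) →
      ((⟨(x.2 : ℕ) + 1 + (x.1 - 1 - (x.2 : ℕ)), (⟨(x.2 : ℕ),
          Nat.lt_of_lt_of_le (Nat.lt_succ_self _) (Nat.le_add_right _ _)⟩ :
          Fin ((x.2 : ℕ) + 1 + (x.1 - 1 - (x.2 : ℕ))))⟩ : Σ n : ℕ, Fin n) = x) := by
    intro x hx
    have h2 := x.2.isLt
    refine Sigma.ext (show (x.2 : ℕ) + 1 + (x.1 - 1 - (x.2 : ℕ)) = x.1 by omega) ?_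
    exact (Fin.heq_ext_iff
      (show (x.2 : ℕ) + 1 + (x.1 - 1 - (x.2 : ℕ)) = x.1 by omega)).mpr rfl
  have hright : ∀ y : ℕ × ℕ,
      y ∈ (Finset.range E.card ×ˢ Finset.range E.card).filter
        (fun y => y.1 + 1 + y.2 < E.card) →
      ((((⟨y.1, Nat.lt_of_lt_of_le (Nat.lt_succ_self y.1) (Nat.le_add_right _ _)⟩ :
          Fin (y.1 + 1 + y.2)) : ℕ), y.1 + 1 + y.2 - 1 -
          ((⟨y.1, Nat.lt_of_lt_of_le (Nat.lt_succ_self y.1) (Nat.le_add_right _ _)⟩ :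
          Fin (y.1 + 1 + y.2)) : ℕ)) : ℕ × ℕ) = y := by
    intro y hy
    obtain ⟨a, b⟩ := y
    simp only [Prod.mk.injEq]
    exact ⟨trivial, show a + 1 + b - 1 - a = b by omega⟩
  have hval : ∀ x : Σ n : ℕ, Fin n,
      x ∈ (Finset.range E.card).sigma (fun m => (Finset.univ : Finset (Fin m))) →
      (Finset.univ.filter (fun f : Fin (x.1 + 1) → {e : TEdge V // e ∈ E} =>
        valid19 E δ f ∧ (f x.2.castSucc).1.2.1 = v)).card =
      (Pairs19 E δ v (x.2 : ℕ) (x.1 - 1 - (x.2 : ℕ))).card := by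
    intro x hx
    obtain ⟨m, i⟩ := x
    obtain ⟨k, hk⟩ := i
    show _ = (Pairs19 E δ v k (m - 1 - k)).card
    obtain ⟨m2, rfl⟩ : ∃ m2, m = k + 1 + m2 := ⟨m - 1 - k, by omega⟩
    have harith : k + 1 + m2 - 1 - k = m2 := by omega
    rw [harith]
    exact split_card E δ v k m2
  exact Finset.sum_nbij'
    (fun x : Σ n : ℕ, Fin n => (((x.2 : ℕ), x.1 - 1 - (x.2 : ℕ)) : ℕ × ℕ))
    (fun y : ℕ × ℕ => (⟨y.1 + 1 + y.2, (⟨y.1, Nat.lt_of_lt_of_le (Nat.lt_succ_self y.1)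
      (Nat.le_add_right _ _)⟩ : Fin (y.1 + 1 + y.2))⟩ : Σ n : ℕ, Fin n))
    hmem1 hmem2 hleft hright hval

end Aux19

/-- Concatenation at `v` is a bijection between pairs (in-walk arriving at `v` at time
`t1`, out-walk starting at `v` at time `t2 ≥ t1`) and temporal walks with a marked
internal occurrence of `v`; hence
`N(v) = Σ_{t1 ≤ t2} W_in(v,t1) · W_out(v,t2)` when the walks are counted (`Φ ≡ 1`). -/
theorem stmt19 {V : Type} [DecidableEq V] (E : Finset (TEdge V)) (δ : ℕ) (hδ : 0 < δ)
    (v : V) :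
    NThrough E δ v =
      ∑ p ∈ (timeSet E δ ×ˢ timeSet E δ).filter (fun p => p.1 ≤ p.2),
        WIn E δ (fun _ _ => (1 : ℝ)) v p.1 * WOut E δ (fun _ _ => (1 : ℝ)) v p.2 := by
  have hL : NThrough E δ v = ((∑ m ∈ Finset.range E.card,
      ∑ f ∈ Finset.univ.filter (fun f : Fin (m + 1) → {e : TEdge V // e ∈ E} =>
          valid19 E δ f),
        (Finset.univ.filter (fun i : Fin m => (f i.castSucc).1.2.1 = v)).card : ℕ) : ℝ) := by
    rw [NThrough]
    push_cast
    rfl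
  have hIn : ∀ t, WIn E δ (fun _ _ => (1 : ℝ)) v t = ((∑ m1 ∈ Finset.range E.card,
      (Finset.univ.filter (fun f : Fin (m1 + 1) → {e : TEdge V // e ∈ E} =>
        valid19 E δ f ∧ (f (Fin.last m1)).1.2.1 = v ∧
          (f (Fin.last m1)).1.2.2 + δ = t)).card : ℕ) : ℝ) := by
    intro t
    rw [WIn]
    push_cast
    refine Finset.sum_congr rfl fun m _ => ?_
    rw [Finset.sum_congr rfl (fun f _ => Finset.prod_const_one), Finset.sum_const,
      nsmul_eq_mul, mul_one]
  have hOut : ∀ t, WOut E δ (fun _ _ => (1 : ℝ)) v t = ((∑ m2 ∈ Finset.range E.card,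
      (Finset.univ.filter (fun f : Fin (m2 + 1) → {e : TEdge V // e ∈ E} =>
        valid19 E δ f ∧ (f 0).1.1 = v ∧ (f 0).1.2.2 = t)).card : ℕ) : ℝ) := by
    intro t
    rw [WOut]
    push_cast
    refine Finset.sum_congr rfl fun m _ => ?_
    rw [Finset.sum_congr rfl (fun f _ => Finset.prod_const_one), Finset.sum_const,
      nsmul_eq_mul, mul_one]
  rw [hL, main_nat E δ v hδ, Nat.cast_sum]
  refine Finset.sum_congr rfl fun p hp => ?_
  rw [hIn p.1, hOut p.2, Nat.cast_mul]
end
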